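/- Let α, β, γ, μ, ν be an admissible solution of System B on an interval. Then the function t ↦ ν(t)·√(α(t)) is constant on that interval, and the function t ↦ μ(t)·√(α(t)) has derivative 8·√(α(t)) at every point of the interval. -/

import Mathlib

/-- **System B**: the homogeneous Ricci flow equations on `SL(2,ℂ)/U(1)` for
real-valued differentiable functions `α β γ μ ν` on a set `s`, with `τ := μ² + ν²`,
together with the admissibility conditions `α > 0`, `β > 0`, `γ > 0`, `βγ > τ`. -/
def IsAdmissibleSolutionB (α β γ μ ν : ℝ → ℝ) (s : Set ℝ) : Prop :=
  ∀ t ∈ s,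
    0 < α t ∧ 0 < β t ∧ 0 < γ t ∧
    μ t ^ 2 + ν t ^ 2 < β t * γ t ∧
    HasDerivWithinAt α
      (2 * (16 * β t * γ t - α t ^ 2) / (β t * γ t - (μ t ^ 2 + ν t ^ 2))) s t ∧
    HasDerivWithinAt β
      (-(β t * (16 * (μ t ^ 2 + ν t ^ 2) - α t ^ 2)) /
        (α t * (β t * γ t - (μ t ^ 2 + ν t ^ 2)))) s t ∧
    HasDerivWithinAt γ
      (-(γ t * (16 * (μ t ^ 2 + ν t ^ 2) - α t ^ 2)) /
        (α t * (β t * γ t - (μ t ^ 2 + ν t ^ 2)))) s t ∧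
    HasDerivWithinAt μ
      (8 - μ t * (16 * β t * γ t - α t ^ 2) /
        (α t * (β t * γ t - (μ t ^ 2 + ν t ^ 2)))) s t ∧
    HasDerivWithinAt ν
      (-(ν t * (16 * β t * γ t - α t ^ 2)) /
        (α t * (β t * γ t - (μ t ^ 2 + ν t ^ 2)))) s t

/-! Along System B, `α' / (2α) = (16βγ - α²) / (α(βγ - τ))`, which is exactly the factor by which
`μ` and `ν` are damped. Hence `(f √α)' = (f' + f α' / (2α)) √α` kills the damping term for
`f = μ` and `f = ν`, leaving `(μ √α)' = 8 √α` and `(ν √α)' = 0`; the mean value inequality on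
the interval then makes `ν √α` constant. -/

open Real

theorem Convex.eq_of_hasDerivWithinAt_eq_zero {𝕜 G : Type*} [RCLike 𝕜] [NormedAddCommGroup G]
    [NormedSpace 𝕜 G] {f : 𝕜 → G} {s : Set 𝕜} (hs : Convex ℝ s)
    (hf : ∀ x ∈ s, HasDerivWithinAt f 0 s x) {x y : 𝕜} (hx : x ∈ s) (hy : y ∈ s) :
    f x = f y := by
  have bound : ∀ z ∈ s, ‖(fun _ => (0 : G)) z‖ ≤ 0 := fun _ _ => by simp
  simpa only [zero_mul, norm_le_zero_iff, sub_eq_zero, eq_comm] using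
    hs.norm_image_sub_le_of_norm_hasDerivWithin_le hf bound hx hy

theorem HasDerivWithinAt.mul_sqrt {f g : ℝ → ℝ} {f' g' t : ℝ} {s : Set ℝ}
    (hf : HasDerivWithinAt f f' s t) (hg : HasDerivWithinAt g g' s t) (hgt : 0 < g t) :
    HasDerivWithinAt (fun u => f u * √(g u)) ((f' + f t * g' / (2 * g t)) * √(g t)) s t := by
  have hsqrt := (hasDerivAt_sqrt hgt.ne').comp_hasDerivWithinAt t hg
  refine (hf.mul hsqrt).congr_deriv ?_
  have hsq : √(g t) ^ 2 = g t := sq_sqrt hgt.le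
  simp only [Function.comp_apply]
  field_simp
  rw [hsq]
  ring

section SystemB

variable {α β γ μ ν : ℝ → ℝ} {s : Set ℝ}

theorem IsAdmissibleSolutionB.hasDerivWithinAt_mu_mul_sqrt
    (h : IsAdmissibleSolutionB α β γ μ ν s) {t : ℝ} (ht : t ∈ s) :
    HasDerivWithinAt (fun u => μ u * √(α u)) (8 * √(α t)) s t := by
  obtain ⟨hα, -, -, hτ, hα', -, -, hμ', -⟩ := h t ht
  refine (hμ'.mul_sqrt hα' hα).congr_deriv ?_
  have hD : β t * γ t - (μ t ^ 2 + ν t ^ 2) ≠ 0 := by linarith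
  field_simp
  ring

theorem IsAdmissibleSolutionB.hasDerivWithinAt_nu_mul_sqrt
    (h : IsAdmissibleSolutionB α β γ μ ν s) {t : ℝ} (ht : t ∈ s) :
    HasDerivWithinAt (fun u => ν u * √(α u)) 0 s t := by
  obtain ⟨hα, -, -, hτ, hα', -, -, -, hν'⟩ := h t ht
  refine (hν'.mul_sqrt hα' hα).congr_deriv ?_
  have hD : β t * γ t - (μ t ^ 2 + ν t ^ 2) ≠ 0 := by linarith
  field_simp
  ring

end SystemB

/-- For an admissible solution of System B on an interval, the function `ν·√α` is
constant on that interval and the function `μ·√α` has derivative `8·√α` at every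
point of the interval. -/
theorem systemB_first_integrals (s : Set ℝ) (hs : s.OrdConnected)
    (α β γ μ ν : ℝ → ℝ)
    (h : IsAdmissibleSolutionB α β γ μ ν s) :
    (∀ t₁ ∈ s, ∀ t₂ ∈ s, ν t₁ * Real.sqrt (α t₁) = ν t₂ * Real.sqrt (α t₂)) ∧
      ∀ t ∈ s, HasDerivWithinAt (fun u => μ u * Real.sqrt (α u))
        (8 * Real.sqrt (α t)) s t :=
  ⟨fun _ ht₁ _ ht₂ => hs.convex.eq_of_hasDerivWithinAt_eq_zero
      (fun _ ht => h.hasDerivWithinAt_nu_mul_sqrt ht) ht₁ ht₂,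
    fun _ ht => h.hasDerivWithinAt_mu_mul_sqrt ht⟩
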